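/- Let M be a nonnegative real-valued function on (unnormalized) two-qubit pure states that is linearly homogeneous (M(λψ⟨ψ|λ̄) = |λ|² M(|ψ⟩⟨ψ|)) and invariant under ψ ↦ (A⊗B)ψ for all A,B ∈ SL(2,ℂ). Then for any invertible 2×2 matrix A₁ with A₁†A₁ ≤ I and Ā₁ = √(I − A₁†A₁), the averaged post-measurement value satisfies M(|ψ⟩⟨ψ|) ≥ M((A₁⊗I)|ψ⟩⟨ψ|(A₁⊗I)†) + M((Ā₁⊗I)|ψ⟩⟨ψ|(Ā₁⊗I)†). -/

import Mathlib

/-!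
Invariance and homogeneity force `M((A ⊗ 1)ψ) = |det A| · M(ψ)` for every `A`. If `A` is
invertible, `A = c • S` with `det S = 1` and `|c|² = |det A|`, so the state is only rescaled by `c`.
If `A` is singular, some `T ∈ SL(2)` has `T A = 2 A`, so `M((A ⊗ 1)ψ)` equals four times itself.
The claim thus reduces to `|det A₁| + |det Ā₁| ≤ 1`, which follows from `A₁†A₁ + Ā₁†Ā₁ = 1` and
`|det X| ≤ tr(X†X) / 2` for `2 × 2` matrices.
-/

open Matrix ComplexOrder

/-- Action of `A ⊗ B` on a two-qubit state given by its coefficients. -/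
noncomputable def act2 (A B : Matrix (Fin 2) (Fin 2) ℂ)
    (ψ : Fin 2 × Fin 2 → ℂ) : Fin 2 × Fin 2 → ℂ :=
  fun x => ∑ i, ∑ j, A x.1 i * B x.2 j * ψ (i, j)

/-- The (unnormalized) density operator `|ψ⟩⟨ψ|`. -/
noncomputable def outer (ψ : Fin 2 × Fin 2 → ℂ) :
    Matrix (Fin 2 × Fin 2) (Fin 2 × Fin 2) ℂ :=
  Matrix.vecMulVec ψ (star ψ)

/-- The positive semidefinite square root of a positive semidefinite matrix
(the definition `Matrix.PosSemidef.sqrt` of the older Mathlib, since removed). -/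
noncomputable def Matrix.PosSemidef.sqrt {n 𝕜 : Type*} [Fintype n] [DecidableEq n] [RCLike 𝕜]
    {A : Matrix n n 𝕜} (hA : A.PosSemidef) : Matrix n n 𝕜 :=
  hA.1.eigenvectorUnitary.1 * diagonal ((↑) ∘ (√·) ∘ hA.1.eigenvalues) *
  (star hA.1.eigenvectorUnitary : Matrix n n 𝕜)

namespace Matrix.PosSemidef

variable {n 𝕜 : Type*} [Fintype n] [DecidableEq n] [RCLike 𝕜] {A : Matrix n n 𝕜}

lemma isHermitian_sqrt (hA : A.PosSemidef) : hA.sqrt.IsHermitian :=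
  isHermitian_mul_mul_conjTranspose _ <| isHermitian_diagonal_iff.2 fun i => by
    simp [isSelfAdjoint_iff]

lemma sqrt_mul_self (hA : A.PosSemidef) : hA.sqrt * hA.sqrt = A := by
  have hsqrt : hA.sqrt = Unitary.conjStarAlgAut 𝕜 _ hA.1.eigenvectorUnitary
      (diagonal ((↑) ∘ (√·) ∘ hA.1.eigenvalues)) := rfl
  conv_rhs => rw [hA.1.spectral_theorem]
  rw [hsqrt, ← map_mul, diagonal_mul_diagonal]
  congr 2
  funext i
  simp [← RCLike.ofReal_mul, Real.mul_self_sqrt (hA.eigenvalues_nonneg i)]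

end Matrix.PosSemidef

open scoped Kronecker

theorem act2_eq_kronecker_mulVec (A B : Matrix (Fin 2) (Fin 2) ℂ) (ψ : Fin 2 × Fin 2 → ℂ) :
    act2 A B ψ = (A ⊗ₖ B) *ᵥ ψ := by
  ext x
  simp [act2, mulVec, dotProduct, Fintype.sum_prod_type]

theorem act2_act2 (A B C D : Matrix (Fin 2) (Fin 2) ℂ) (ψ : Fin 2 × Fin 2 → ℂ) :
    act2 A B (act2 C D ψ) = act2 (A * C) (B * D) ψ := by
  simp only [act2_eq_kronecker_mulVec, mulVec_mulVec, mul_kronecker_mul]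

theorem act2_smul_left (c : ℂ) (A B : Matrix (Fin 2) (Fin 2) ℂ) (ψ : Fin 2 × Fin 2 → ℂ) :
    act2 (c • A) B ψ = c • act2 A B ψ := by
  simp only [act2_eq_kronecker_mulVec, smul_kronecker, smul_mulVec]

theorem outer_smul (c : ℂ) (ψ : Fin 2 × Fin 2 → ℂ) :
    outer (c • ψ) = (Complex.normSq c : ℂ) • outer ψ := by
  ext i j
  simp only [outer, star_smul, RCLike.star_def, vecMulVec_apply, Pi.smul_apply, smul_eq_mul,
    Pi.star_apply, Complex.normSq_eq_conj_mul_self, Matrix.smul_apply]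
  ring

theorem det_fin_two_smul_one_add {R : Type*} [CommRing R] (c : R) (X : Matrix (Fin 2) (Fin 2) R) :
    (c • 1 + X).det = c ^ 2 + c * X.trace + X.det := by
  simp only [det_fin_two, trace_fin_two, Matrix.add_apply, Matrix.smul_apply, one_apply_eq,
    one_apply_ne, ne_eq, zero_ne_one, one_ne_zero, not_false_eq_true, smul_eq_mul, mul_one, mul_zero,
    zero_add]
  ring

theorem norm_det_le_half_re_trace {𝕜 : Type*} [RCLike 𝕜] (A : Matrix (Fin 2) (Fin 2) 𝕜) :
    ‖A.det‖ ≤ RCLike.re (Aᴴ * A).trace / 2 := by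
  have hre : RCLike.re (Aᴴ * A).trace = ‖A 0 0‖ ^ 2 + ‖A 0 1‖ ^ 2 + ‖A 1 0‖ ^ 2 + ‖A 1 1‖ ^ 2 := by
    simp only [trace_fin_two, mul_apply, conjTranspose_apply, RCLike.star_def, RCLike.conj_mul,
      Fin.sum_univ_two, map_add, RCLike.re_ofReal_pow]
    ring
  rw [hre, det_fin_two]
  calc ‖A 0 0 * A 1 1 - A 0 1 * A 1 0‖ ≤ ‖A 0 0‖ * ‖A 1 1‖ + ‖A 0 1‖ * ‖A 1 0‖ := by
        simpa only [norm_mul] using norm_sub_le (A 0 0 * A 1 1) (A 0 1 * A 1 0)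
    _ ≤ _ := by nlinarith [sq_nonneg (‖A 0 0‖ - ‖A 1 1‖), sq_nonneg (‖A 0 1‖ - ‖A 1 0‖)]

theorem norm_det_add_norm_det_le_one {𝕜 : Type*} [RCLike 𝕜] {A B : Matrix (Fin 2) (Fin 2) 𝕜}
    (h : Aᴴ * A + Bᴴ * B = 1) : ‖A.det‖ + ‖B.det‖ ≤ 1 := by
  have htr : RCLike.re (Aᴴ * A).trace + RCLike.re (Bᴴ * B).trace = 2 := by
    rw [← map_add, ← trace_add, h]
    simp
  linarith [norm_det_le_half_re_trace A, norm_det_le_half_re_trace B]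

theorem exists_det_eq_one_mul_eq_smul {𝕜 : Type*} [RCLike 𝕜] {A : Matrix (Fin 2) (Fin 2) 𝕜}
    (hA : A.det = 0) {c : 𝕜} (hc : c ≠ 0) :
    ∃ T : Matrix (Fin 2) (Fin 2) 𝕜, T.det = 1 ∧ T * A = c • A := by
  rcases eq_or_ne A 0 with rfl | hA0
  · exact ⟨1, det_one, by simp⟩
  -- `adj A * A = 0`, so `c • 1 + k • G` acts on `A` as `c`; `tr G = ‖adj A‖² ≠ 0` lets us
  -- choose `k` with `det (c • 1 + k • G) = c ^ 2 + c k tr G = 1`.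
  set G := (adjugate A)ᴴ * adjugate A
  have hG : G.trace ≠ 0 := by
    rw [Ne, trace_conjTranspose_mul_self_eq_zero_iff]
    intro h
    apply hA0
    simpa [h] using (adjugate_adjugate' A).symm
  have hGA : G * A = 0 := by
    rw [Matrix.mul_assoc, adjugate_mul, hA, zero_smul, Matrix.mul_zero]
  have hdetG : G.det = 0 := by
    rw [det_mul, det_adjugate, Fintype.card_fin, hA]
    simp
  refine ⟨c • 1 + (-(c ^ 2 - 1) / (c * G.trace)) • G, ?_, ?_⟩
  · rw [det_fin_two_smul_one_add, trace_smul, det_smul, hdetG, smul_eq_mul]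
    field_simp
    ring
  · rw [Matrix.add_mul, Matrix.smul_mul, Matrix.smul_mul, hGA, smul_zero, add_zero, Matrix.one_mul]

section Invariant

variable {M : Matrix (Fin 2 × Fin 2) (Fin 2 × Fin 2) ℂ → ℝ}
    (hhom : ∀ (c : ℝ), 0 ≤ c → ∀ ψ : Fin 2 × Fin 2 → ℂ,
      M ((c : ℂ) • outer ψ) = c * M (outer ψ))
    (hinv : ∀ (A B : Matrix (Fin 2) (Fin 2) ℂ), A.det = 1 → B.det = 1 →
      ∀ ψ : Fin 2 × Fin 2 → ℂ, M (outer (act2 A B ψ)) = M (outer ψ))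
include hhom

theorem apply_outer_smul (c : ℂ) (ψ : Fin 2 × Fin 2 → ℂ) :
    M (outer (c • ψ)) = Complex.normSq c * M (outer ψ) := by
  rw [outer_smul, hhom _ (Complex.normSq_nonneg c)]

include hinv

theorem apply_outer_act2_of_det_eq_zero {A : Matrix (Fin 2) (Fin 2) ℂ} (hA : A.det = 0)
    (ψ : Fin 2 × Fin 2 → ℂ) : M (outer (act2 A 1 ψ)) = 0 := by
  obtain ⟨T, hT, hTA⟩ := exists_det_eq_one_mul_eq_smul hA (two_ne_zero (α := ℂ))
  have h := hinv T 1 hT det_one (act2 A 1 ψ)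
  rw [act2_act2, hTA, mul_one, act2_smul_left, apply_outer_smul hhom,
    Complex.normSq_ofNat] at h
  linarith

theorem apply_outer_act2 (A : Matrix (Fin 2) (Fin 2) ℂ) (ψ : Fin 2 × Fin 2 → ℂ) :
    M (outer (act2 A 1 ψ)) = ‖A.det‖ * M (outer ψ) := by
  rcases eq_or_ne A.det 0 with hA | hA
  · rw [apply_outer_act2_of_det_eq_zero hhom hinv hA, hA, norm_zero, zero_mul]
  obtain ⟨c, hc⟩ := IsAlgClosed.exists_pow_nat_eq A.det two_pos
  have hc0 : c ≠ 0 := by rintro rfl; simp_all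
  have hdet : (c⁻¹ • A).det = 1 := by
    rw [det_smul, Fintype.card_fin, inv_pow, hc, inv_mul_cancel₀ hA]
  calc M (outer (act2 A 1 ψ)) = M (outer (c • act2 (c⁻¹ • A) 1 ψ)) := by
        rw [← act2_smul_left, smul_inv_smul₀ hc0]
    _ = ‖A.det‖ * M (outer ψ) := by
        rw [apply_outer_smul hhom, hinv _ 1 hdet det_one, ← hc, norm_pow, Complex.normSq_eq_norm_sq]

end Invariant

theorem monotone_under_local_measurement_general
    (M : Matrix (Fin 2 × Fin 2) (Fin 2 × Fin 2) ℂ → ℝ)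
    (hpos : ∀ ψ : Fin 2 × Fin 2 → ℂ, 0 ≤ M (outer ψ))
    (hhom : ∀ (c : ℝ), 0 ≤ c → ∀ ψ : Fin 2 × Fin 2 → ℂ,
      M ((c : ℂ) • outer ψ) = c * M (outer ψ))
    (hinv : ∀ (A B : Matrix (Fin 2) (Fin 2) ℂ), A.det = 1 → B.det = 1 →
      ∀ ψ : Fin 2 × Fin 2 → ℂ, M (outer (act2 A B ψ)) = M (outer ψ))
    (ψ : Fin 2 × Fin 2 → ℂ)
    (A₁ : Matrix (Fin 2) (Fin 2) ℂ)
    (h : (1 - A₁ᴴ * A₁).PosSemidef) :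
    M (outer (act2 A₁ 1 ψ)) + M (outer (act2 (Matrix.PosSemidef.sqrt h) 1 ψ)) ≤ M (outer ψ) := by
  have hkraus : A₁ᴴ * A₁ + (h.sqrt)ᴴ * h.sqrt = 1 := by
    rw [h.isHermitian_sqrt.eq, h.sqrt_mul_self, add_sub_cancel]
  rw [apply_outer_act2 hhom hinv, apply_outer_act2 hhom hinv, ← add_mul]
  exact mul_le_of_le_one_left (hpos ψ) (norm_det_add_norm_det_le_one hkraus)

/-- if `M` is nonnegative, linearly homogeneous in `|ψ⟩⟨ψ|` and
invariant under determinant-1 local operations, then for any invertible `A₁` with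
`A₁†A₁ ≤ I` and `Ā₁ = √(I − A₁†A₁)`:
`M(|ψ⟩⟨ψ|) ≥ M((A₁⊗I)|ψ⟩⟨ψ|(A₁⊗I)†) + M((Ā₁⊗I)|ψ⟩⟨ψ|(Ā₁⊗I)†)`. -/
theorem monotone_under_local_measurement
    (M : Matrix (Fin 2 × Fin 2) (Fin 2 × Fin 2) ℂ → ℝ)
    (hpos : ∀ ψ : Fin 2 × Fin 2 → ℂ, 0 ≤ M (outer ψ))
    (hhom : ∀ (c : ℝ), 0 ≤ c → ∀ ψ : Fin 2 × Fin 2 → ℂ,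
      M ((c : ℂ) • outer ψ) = c * M (outer ψ))
    (hinv : ∀ (A B : Matrix (Fin 2) (Fin 2) ℂ), A.det = 1 → B.det = 1 →
      ∀ ψ : Fin 2 × Fin 2 → ℂ, M (outer (act2 A B ψ)) = M (outer ψ))
    (ψ : Fin 2 × Fin 2 → ℂ)
    (A₁ : Matrix (Fin 2) (Fin 2) ℂ) (hA₁ : IsUnit A₁.det)
    (h : (1 - A₁ᴴ * A₁).PosSemidef) :
    M (outer (act2 A₁ 1 ψ)) + M (outer (act2 (Matrix.PosSemidef.sqrt h) 1 ψ)) ≤ M (outer ψ) :=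
  monotone_under_local_measurement_general M hpos hhom hinv ψ A₁ h
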